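/- arXiv:2109.06008 — 2 statements merged into one kernel-verified Lean document; each statement's English description precedes it below -/
import Mathlib

section
/- Fix reals λ, r, b, ν > 0, d ≥ 0 with b > d, δ > 0, and β̂ > 0, and let q(θ,ψ) := min{β̂ψ, 1} (follow-the-crowd response). Set ρ := λ/(r+b) and μ := b/ν, and assume ρ > 1 and μρ < β̂ < μ + 1. Let θ̂ := 0, ψ̂ := 1 − μ/β̂, and η̂ := (b−d)/ϱ(θ̂,ψ̂). If η̂ > δ, then the point P := (θ̂, ψ̂, η̂) is a Lyapunov-stable equilibrium of g. -/
/-- `ϱ(θ,ψ) = b + d + λθφ + νφ + rθ` with `φ = 1 − θ − ψ` (case `d_e = 0`). -/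
noncomputable def varrho (lam r b ν d θ ψ : ℝ) : ℝ :=
  b + d + lam * θ * (1 - θ - ψ) + ν * (1 - θ - ψ) + r * θ

/-- The vector field `g = (g^θ, g^ψ, g^η)` of the limit ODE for the epidemic model with
vaccination-response function `q`, on coordinates `(θ, ψ, η)`. -/
noncomputable def epiVF (lam r b ν d : ℝ) (q : ℝ → ℝ → ℝ) (x : ℝ × ℝ × ℝ) : ℝ × ℝ × ℝ :=
  (x.1 / (x.2.2 * varrho lam r b ν d x.1 x.2.1) * ((1 - x.1 - x.2.1) * lam - r - b),
   1 / (x.2.2 * varrho lam r b ν d x.1 x.2.1) *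
     (q x.1 x.2.1 * (1 - x.1 - x.2.1) * ν - b * x.2.1),
   (b - d) / varrho lam r b ν d x.1 x.2.1 - x.2.2)

/-- The domain `D = {(θ,ψ,η) : θ ≥ 0, ψ ≥ 0, θ+ψ ≤ 1, η > δ}`. -/
def domD (δ : ℝ) : Set (ℝ × ℝ × ℝ) :=
  {x | 0 ≤ x.1 ∧ 0 ≤ x.2.1 ∧ x.1 + x.2.1 ≤ 1 ∧ δ < x.2.2}

/-- `P ∈ D` is a Lyapunov-stable equilibrium of `g`: `g(P) = 0` and there are `r₀ > 0` and a
continuously differentiable `V` with `V(P) = 0`, `V(x) > 0` and `⟨∇V(x), g(x)⟩ < 0` for all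
`x ∈ D ∩ B(P,r₀)`, `x ≠ P`. -/
def IsLyapunovStableEquilibrium (g : ℝ × ℝ × ℝ → ℝ × ℝ × ℝ) (D : Set (ℝ × ℝ × ℝ))
    (P : ℝ × ℝ × ℝ) : Prop :=
  P ∈ D ∧ g P = 0 ∧
    ∃ r₀ > (0 : ℝ), ∃ V : ℝ × ℝ × ℝ → ℝ, ContDiff ℝ 1 V ∧ V P = 0 ∧
      ∀ x ∈ D ∩ Metric.ball P r₀, x ≠ P → 0 < V x ∧ fderiv ℝ V x (g x) < 0

open Filter Topology

/-!
Near `P = (0, ψ̂, η̂)` the field contracts coordinate by coordinate on `D`. The `θ`-equation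
decays at a linear rate because `λ(1 - ψ̂) < r + b`, which is `μρ < β̂`. Since `β̂ψ̂ < 1` the
response stays linear near `P`, and the equilibrium relation `b = β̂ν(1 - ψ̂)` makes the
`ψ`-numerator factor as `-β̂νψ(θ + ψ - ψ̂)`, so `ψ - ψ̂` is pulled back up to an `O(θ)` error.
Finally `η` relaxes towards `(b - d)/ϱ`, which is Lipschitz in `(θ, ψ)` since `ϱ ≥ b` on `D`.
As `θ ≥ 0` on `D`, `V = Aθ + C(ψ - ψ̂)² + (η - η̂)²` is positive off `P`, and for `A` and `C`
large enough its derivative along the field is at most `-θ - (ψ - ψ̂)² - (η - η̂)²`.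
-/

lemma abs_div_sub_div_le {k x y m : ℝ} (hm : 0 < m) (hx : m ≤ x) (hy : m ≤ y) :
    |k / x - k / y| ≤ |k| / m ^ 2 * |x - y| := by
  have hx0 : 0 < x := hm.trans_le hx
  have hy0 : 0 < y := hm.trans_le hy
  rw [div_sub_div _ _ hx0.ne' hy0.ne', abs_div, abs_of_pos (mul_pos hx0 hy0),
    show k * y - x * k = k * -(x - y) by ring, abs_mul, abs_neg, div_mul_eq_mul_div]
  gcongr
  nlinarith

lemma sub_div_le_div_sub_div {α γ s s₀ s₁ : ℝ} (hα : 0 ≤ α) (hγ : 0 ≤ γ) (hs₀ : 0 < s₀)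
    (h₀ : s₀ ≤ s) (h₁ : s ≤ s₁) : (γ - α) / s ≤ γ / s₀ - α / s₁ := by
  have hs : 0 < s := hs₀.trans_le h₀
  rw [sub_div]
  gcongr

lemma fderiv_mul_fst_add_mul_sq_add_sq (A C p q : ℝ) (x y : ℝ × ℝ × ℝ) :
    fderiv ℝ (fun z : ℝ × ℝ × ℝ => A * z.1 + C * (z.2.1 - p) ^ 2 + (z.2.2 - q) ^ 2) x y
      = A * y.1 + 2 * C * (x.2.1 - p) * y.2.1 + 2 * (x.2.2 - q) * y.2.2 := by
  have hψ : HasFDerivAt (fun z : ℝ × ℝ × ℝ => z.2.1 - p)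
      ((ContinuousLinearMap.fst ℝ ℝ ℝ).comp (ContinuousLinearMap.snd ℝ ℝ (ℝ × ℝ))) x :=
    hasFDerivAt_snd.fst.sub_const p
  have hη : HasFDerivAt (fun z : ℝ × ℝ × ℝ => z.2.2 - q)
      ((ContinuousLinearMap.snd ℝ ℝ ℝ).comp (ContinuousLinearMap.snd ℝ ℝ (ℝ × ℝ))) x :=
    hasFDerivAt_snd.snd.sub_const q
  have h := ((hasFDerivAt_fst.const_mul A).add ((hψ.pow 2).const_mul C)).add (hη.pow 2)
  rw [h.fderiv (f := fun z : ℝ × ℝ × ℝ => A * z.1 + C * (z.2.1 - p) ^ 2 + (z.2.2 - q) ^ 2)]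
  simp only [Nat.add_one_sub_one, pow_one, nsmul_eq_mul, Nat.cast_ofNat,
    add_apply, smul_apply, ContinuousLinearMap.coe_fst',
    smul_eq_mul, ContinuousLinearMap.comp_apply, ContinuousLinearMap.coe_snd']
  ring

lemma mul_fst_add_mul_sq_add_mul_sq_pos {x : ℝ × ℝ × ℝ} {p q a b c : ℝ} (hx : 0 ≤ x.1)
    (hxP : x ≠ (0, p, q)) (ha : 0 < a) (hb : 0 < b) (hc : 0 < c) :
    0 < a * x.1 + b * (x.2.1 - p) ^ 2 + c * (x.2.2 - q) ^ 2 := by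
  obtain ⟨θ, ψ, η⟩ := x
  by_contra! h
  have hθ : θ = 0 := by nlinarith [sq_nonneg (ψ - p), sq_nonneg (η - q)]
  have hψ : (ψ - p) ^ 2 = 0 := by nlinarith [sq_nonneg (ψ - p), sq_nonneg (η - q)]
  have hη : (η - q) ^ 2 = 0 := by nlinarith [sq_nonneg (ψ - p), sq_nonneg (η - q)]
  simp only [pow_eq_zero_iff two_ne_zero, sub_eq_zero] at hψ hη
  exact hxP (by rw [hθ, hψ, hη])

theorem isLyapunovStableEquilibrium_of_bounds {g : ℝ × ℝ × ℝ → ℝ × ℝ × ℝ}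
    {D : Set (ℝ × ℝ × ℝ)} {p q κ₁ κ₂ κ₃ K L M : ℝ} (hD : ∀ x ∈ D, 0 ≤ x.1)
    (hP : (0, p, q) ∈ D) (hgP : g (0, p, q) = 0) (hκ₁ : 0 < κ₁) (hκ₂ : 0 < κ₂) (hκ₃ : 0 < κ₃)
    (hK : 0 ≤ K) (hM : 0 ≤ M)
    (hg : ∀ᶠ x in 𝓝 (0, p, q), x ∈ D →
      (g x).1 ≤ -κ₁ * x.1 ∧
      (x.2.1 - p) * (g x).2.1 ≤ -κ₂ * (x.2.1 - p) ^ 2 + K * x.1 ∧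
      (x.2.2 - q) * (g x).2.2 ≤ -κ₃ * (x.2.2 - q) ^ 2 + L * |x.2.2 - q| * |x.2.1 - p| + M * x.1) :
    IsLyapunovStableEquilibrium g D (0, p, q) := by
  obtain ⟨r₀, hr₀, hball⟩ := Metric.eventually_nhds_iff_ball.1 hg
  set C := (1 + L ^ 2 / κ₃) / (2 * κ₂) with hC_def
  set A := (1 + 2 * C * K + 2 * M) / κ₁ with hA_def
  have hC : 0 < C := by positivity
  have hA : 0 < A := by positivity
  have hCκ₂ : 2 * C * κ₂ = 1 + L ^ 2 / κ₃ := by rw [hC_def]; field_simp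
  have hAκ₁ : A * κ₁ = 1 + 2 * C * K + 2 * M := by rw [hA_def]; field_simp
  refine ⟨hP, hgP, r₀, hr₀, fun x => A * x.1 + C * (x.2.1 - p) ^ 2 + (x.2.2 - q) ^ 2,
    by fun_prop, by simp, ?_⟩
  rintro x ⟨hxD, hxr⟩ hxP
  obtain ⟨hg₁, hg₂, hg₃⟩ := hball x hxr hxD
  have hx := hD x hxD
  refine ⟨by simpa using mul_fst_add_mul_sq_add_mul_sq_pos hx hxP hA hC one_pos, ?_⟩
  rw [fderiv_mul_fst_add_mul_sq_add_sq]
  -- AM-GM absorbs the cross term of the η-equation into the ψ- and η-squares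
  have hamgm : 2 * (L * |x.2.2 - q| * |x.2.1 - p|)
      ≤ κ₃ * (x.2.2 - q) ^ 2 + L ^ 2 / κ₃ * (x.2.1 - p) ^ 2 := by
    have := sq_nonneg (κ₃ * |x.2.2 - q| - L * |x.2.1 - p|)
    rw [← sq_abs (x.2.2 - q), ← sq_abs (x.2.1 - p), div_mul_eq_mul_div, ← sub_nonneg]
    have e : κ₃ * |x.2.2 - q| ^ 2 + L ^ 2 * |x.2.1 - p| ^ 2 / κ₃
          - 2 * (L * |x.2.2 - q| * |x.2.1 - p|)
        = (κ₃ * |x.2.2 - q| - L * |x.2.1 - p|) ^ 2 / κ₃ := by field_simp; ring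
    rw [e]; positivity
  have hneg := mul_fst_add_mul_sq_add_mul_sq_pos hx hxP one_pos one_pos hκ₃
  linear_combination A * hg₁ + 2 * C * hg₂ + 2 * hg₃ + hamgm + hneg - x.1 * hAκ₁
    - (x.2.1 - p) ^ 2 * hCκ₂

section
variable {lam r b ν d : ℝ}

lemma le_varrho (hlam : 0 ≤ lam) (hν : 0 ≤ ν) (hr : 0 ≤ r) (hd : 0 ≤ d) {θ ψ : ℝ}
    (hθ : 0 ≤ θ) (hφ : 0 ≤ 1 - θ - ψ) : b ≤ varrho lam r b ν d θ ψ := by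
  unfold varrho
  have : 0 ≤ lam * θ * (1 - θ - ψ) := by positivity
  nlinarith

lemma abs_varrho_sub_varrho_le (hlam : 0 ≤ lam) (hν : 0 ≤ ν) (hr : 0 ≤ r) {θ ψ p : ℝ}
    (hθ : 0 ≤ θ) (hψ : 0 ≤ ψ) (hφ : 0 ≤ 1 - θ - ψ) :
    |varrho lam r b ν d θ ψ - varrho lam r b ν d 0 p| ≤ (lam + ν + r) * (θ + |ψ - p|) := by
  have e : varrho lam r b ν d θ ψ - varrho lam r b ν d 0 p
      = lam * θ * (1 - θ - ψ) - ν * (θ + (ψ - p)) + r * θ := by unfold varrho; ring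
  have h₁ : 0 ≤ lam * θ * (1 - θ - ψ) := by positivity
  have h₂ : lam * θ * (1 - θ - ψ) ≤ lam * θ := by nlinarith [mul_nonneg hlam hθ]
  rw [e, abs_le]
  constructor <;> nlinarith [abs_nonneg (ψ - p), le_abs_self (ψ - p), neg_abs_le (ψ - p)]

lemma epiVF_fst_le (q : ℝ → ℝ → ℝ) {θ ψ η κ s₁ : ℝ} (hθ : 0 ≤ θ) (hκ : 0 ≤ κ)
    (hs : 0 < η * varrho lam r b ν d θ ψ) (hs₁ : η * varrho lam r b ν d θ ψ ≤ s₁)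
    (hE : (1 - θ - ψ) * lam - r - b ≤ -κ) :
    (epiVF lam r b ν d q (θ, ψ, η)).1 ≤ -(κ / s₁) * θ := by
  simp only [epiVF]
  calc θ / (η * varrho lam r b ν d θ ψ) * ((1 - θ - ψ) * lam - r - b)
      ≤ θ / (η * varrho lam r b ν d θ ψ) * -κ := by gcongr
    _ = -(κ * θ / (η * varrho lam r b ν d θ ψ)) := by ring
    _ ≤ -(κ * θ / s₁) := by gcongr
    _ = -(κ / s₁) * θ := by ring

lemma sub_mul_epiVF_snd_le {β p θ ψ η s₀ s₁ : ℝ} (hβ : 0 ≤ β) (hν : 0 ≤ ν)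
    (hbp : b = β * ν * (1 - p)) (hθ : 0 ≤ θ) (hp : 0 ≤ p) (hψp : p / 2 ≤ ψ) (hψ : ψ ≤ 1)
    (hv : |ψ - p| ≤ 1) (hβψ : β * ψ ≤ 1) (hs₀ : 0 < s₀) (h₀ : s₀ ≤ η * varrho lam r b ν d θ ψ)
    (h₁ : η * varrho lam r b ν d θ ψ ≤ s₁) :
    (ψ - p) * (epiVF lam r b ν d (fun _ ψ => min (β * ψ) 1) (θ, ψ, η)).2.1
      ≤ -(β * ν * p / 2 / s₁) * (ψ - p) ^ 2 + β * ν / s₀ * θ := by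
  simp only [epiVF, min_eq_left hβψ]
  have hψ₀ : 0 ≤ ψ := by linarith
  have hnum : (ψ - p) * (β * ψ * (1 - θ - ψ) * ν - b * ψ)
      ≤ β * ν * θ - β * ν * p / 2 * (ψ - p) ^ 2 := by
    have e : (ψ - p) * (β * ψ * (1 - θ - ψ) * ν - b * ψ)
        = -(β * ν) * (ψ * (ψ - p) * θ + ψ * (ψ - p) ^ 2) := by rw [hbp]; ring
    have h₁ : -(ψ * (ψ - p) * θ) ≤ θ :=
      calc -(ψ * (ψ - p) * θ) ≤ ψ * |ψ - p| * θ := by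
            nlinarith [neg_abs_le (ψ - p), mul_nonneg hψ₀ hθ]
        _ ≤ 1 * θ := by gcongr; exact mul_le_one₀ hψ (abs_nonneg _) hv
        _ = θ := one_mul θ
    have h₂ : p / 2 * (ψ - p) ^ 2 ≤ ψ * (ψ - p) ^ 2 := by gcongr
    have hβν : 0 ≤ β * ν := by positivity
    rw [e]; nlinarith
  have hs : 0 < η * varrho lam r b ν d θ ψ := hs₀.trans_le h₀
  calc (ψ - p) * (1 / (η * varrho lam r b ν d θ ψ) * (β * ψ * (1 - θ - ψ) * ν - b * ψ))
      = (ψ - p) * (β * ψ * (1 - θ - ψ) * ν - b * ψ) / (η * varrho lam r b ν d θ ψ) := by ring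
    _ ≤ (β * ν * θ - β * ν * p / 2 * (ψ - p) ^ 2) / (η * varrho lam r b ν d θ ψ) := by gcongr
    _ ≤ β * ν * θ / s₀ - β * ν * p / 2 * (ψ - p) ^ 2 / s₁ :=
        sub_div_le_div_sub_div (by positivity) (by positivity) hs₀ h₀ h₁
    _ = _ := by ring

lemma sub_mul_epiVF_snd_snd_le (q : ℝ → ℝ → ℝ) {p η₀ θ ψ η L : ℝ} (hθ : 0 ≤ θ) (hL : 0 ≤ L)
    (hF : |(b - d) / varrho lam r b ν d θ ψ - η₀| ≤ L * (θ + |ψ - p|)) (hw : |η - η₀| ≤ 1) :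
    (η - η₀) * (epiVF lam r b ν d q (θ, ψ, η)).2.2
      ≤ -1 * (η - η₀) ^ 2 + L * |η - η₀| * |ψ - p| + L * θ := by
  simp only [epiVF]
  have hwF : (η - η₀) * ((b - d) / varrho lam r b ν d θ ψ - η₀)
      ≤ |η - η₀| * (L * (θ + |ψ - p|)) := by
    calc (η - η₀) * ((b - d) / varrho lam r b ν d θ ψ - η₀)
        ≤ |(η - η₀) * ((b - d) / varrho lam r b ν d θ ψ - η₀)| := le_abs_self _
      _ ≤ _ := by rw [abs_mul]; gcongr
  have hwθ : L * |η - η₀| * θ ≤ L * θ := by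
    nlinarith [mul_nonneg hL hθ]
  linear_combination hwF + hwθ

lemma epiVF_followCrowd_eq_zero {β p : ℝ} (hβp : β * p ≤ 1) (hbp : b = β * ν * (1 - p)) :
    epiVF lam r b ν d (fun _ ψ => min (β * ψ) 1) (0, p, (b - d) / varrho lam r b ν d 0 p) = 0 := by
  simp only [epiVF, min_eq_left hβp, Prod.mk_eq_zero]
  refine ⟨by simp, ?_, by simp⟩
  rw [hbp]; ring

lemma eventually_followCrowd_local_bounds {β p η₀ : ℝ} (hp : 0 < p) (hβp : β * p < 1)
    (hE : (1 - p) * lam < r + b) :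
    ∀ᶠ x in 𝓝 ((0 : ℝ), p, η₀),
      x.2.2 * varrho lam r b ν d x.1 x.2.1 ≤ η₀ * varrho lam r b ν d 0 p + 1 ∧
      (1 - x.1 - x.2.1) * lam - r - b ≤ -((r + b - (1 - p) * lam) / 2) ∧
      p / 2 ≤ x.2.1 ∧ |x.2.1 - p| ≤ 1 ∧ |x.2.2 - η₀| ≤ 1 ∧ β * x.2.1 ≤ 1 := by
  have hϱ : Continuous fun x : ℝ × ℝ × ℝ => varrho lam r b ν d x.1 x.2.1 := by
    unfold varrho; fun_prop
  have hs : Continuous fun x : ℝ × ℝ × ℝ => x.2.2 * varrho lam r b ν d x.1 x.2.1 := by fun_prop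
  refine ((hs.tendsto _).eventually_le_const (by simp)).and <|
    (((by fun_prop : Continuous fun x : ℝ × ℝ × ℝ => (1 - x.1 - x.2.1) * lam - r - b).tendsto _
      ).eventually_le_const (by simp; linarith)).and <|
    ((continuous_snd.fst.tendsto _).eventually_const_le (by simp; linarith)).and <|
    (((by fun_prop : Continuous fun x : ℝ × ℝ × ℝ => |x.2.1 - p|).tendsto _
      ).eventually_le_const (by simp)).and <|
    (((by fun_prop : Continuous fun x : ℝ × ℝ × ℝ => |x.2.2 - η₀|).tendsto _
      ).eventually_le_const (by simp)).and <|
    ((continuous_snd.fst.const_mul β).tendsto _).eventually_le_const (by simpa using hβp)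

end

theorem isLyapunovStableEquilibrium_epiVF_followCrowd {lam r b ν d δ β p : ℝ} (hlam : 0 ≤ lam)
    (hr : 0 ≤ r) (hb : 0 < b) (hν : 0 < ν) (hd : 0 ≤ d) (hδ : 0 < δ) (hβ : 0 < β) (hp : 0 < p)
    (hβp : β * p < 1) (hbp : b = β * ν * (1 - p)) (hE : (1 - p) * lam < r + b)
    (hδη : δ < (b - d) / varrho lam r b ν d 0 p) :
    IsLyapunovStableEquilibrium (epiVF lam r b ν d fun _ ψ => min (β * ψ) 1) (domD δ)
      (0, p, (b - d) / varrho lam r b ν d 0 p) := by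
  set η₀ := (b - d) / varrho lam r b ν d 0 p
  have hp₁ : p < 1 := by
    by_contra! h
    nlinarith [mul_nonpos_of_nonneg_of_nonpos (mul_pos hβ hν).le (sub_nonpos.2 h)]
  have hϱ₀ : b ≤ varrho lam r b ν d 0 p := le_varrho hlam hν.le hr hd le_rfl (by linarith)
  set s₁ := η₀ * varrho lam r b ν d 0 p + 1
  have hs₁ : 0 < s₁ := by
    have := hδ.trans hδη
    have := hb.trans_le hϱ₀
    positivity
  set L := |b - d| / b ^ 2 * (lam + ν + r)
  refine isLyapunovStableEquilibrium_of_bounds (κ₁ := (r + b - (1 - p) * lam) / 2 / s₁)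
    (κ₂ := β * ν * p / 2 / s₁) (K := β * ν / (δ * b)) (L := L) (M := L) (fun x hx => hx.1)
    ⟨le_rfl, hp.le, by simpa using hp₁.le, hδη⟩ (epiVF_followCrowd_eq_zero hβp.le hbp)
    (div_pos (by linarith) hs₁) (by positivity) one_pos (by positivity) (by positivity) ?_
  filter_upwards [eventually_followCrowd_local_bounds (d := d) (ν := ν) (η₀ := η₀) hp hβp hE]
    with ⟨θ, ψ, η⟩ ⟨hs, hE', hψp, hv, hw, hβψ⟩ ⟨hθ, hψ, hθψ, hη⟩
  have hϱ : b ≤ varrho lam r b ν d θ ψ := le_varrho hlam hν.le hr hd hθ (by linarith)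
  have h₀ : δ * b ≤ η * varrho lam r b ν d θ ψ := mul_le_mul hη.le hϱ hb.le (by linarith)
  have hF : |(b - d) / varrho lam r b ν d θ ψ - η₀| ≤ L * (θ + |ψ - p|) :=
    calc |(b - d) / varrho lam r b ν d θ ψ - η₀|
        ≤ |b - d| / b ^ 2 * |varrho lam r b ν d θ ψ - varrho lam r b ν d 0 p| :=
          abs_div_sub_div_le hb hϱ hϱ₀
      _ ≤ L * (θ + |ψ - p|) := by
          rw [mul_assoc]
          gcongr
          exact abs_varrho_sub_varrho_le hlam hν.le hr hθ hψ (by linarith)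
  exact ⟨epiVF_fst_le _ hθ (by linarith) ((mul_pos hδ hb).trans_le h₀) hs hE',
    sub_mul_epiVF_snd_le hβ.le hν.le hbp hθ hp.le hψp (by linarith) hv hβψ (by positivity) h₀ hs,
    sub_mul_epiVF_snd_snd_le _ hθ (by positivity) hF hw⟩

theorem stmt_6_general (lam r b ν d δ βh ρ μ θh ψh ηh : ℝ)
    (hlam : 0 < lam) (hr : 0 < r) (hb : 0 < b) (hν : 0 < ν)
    (hd : 0 ≤ d) (hδ : 0 < δ) (hβ : 0 < βh)
    (hρdef : ρ = lam / (r + b)) (hμdef : μ = b / ν)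
    (hρ : 1 < ρ) (hβgt : μ * ρ < βh) (hβlt : βh < μ + 1)
    (hθ : θh = 0) (hψ : ψh = 1 - μ / βh)
    (hηdef : ηh = (b - d) / varrho lam r b ν d θh ψh) (hη : δ < ηh) :
    IsLyapunovStableEquilibrium
      (epiVF lam r b ν d (fun _ ψ => min (βh * ψ) 1)) (domD δ) (θh, ψh, ηh) := by
  subst hθ hηdef hψ hρdef hμdef
  have hμ : 0 < b / ν := by positivity
  have hμβ : b / ν < βh := by nlinarith
  refine isLyapunovStableEquilibrium_epiVF_followCrowd hlam.le hr.le hb hν hd hδ hβ ?_ ?_ ?_ ?_ hη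
  · rwa [sub_pos, div_lt_one hβ]
  · rw [mul_sub, mul_div_cancel₀ _ hβ.ne']
    linarith
  · field_simp
    ring
  · rw [sub_sub_cancel, div_mul_eq_mul_div, div_lt_iff₀ hβ]
    rw [← mul_div_assoc, div_lt_iff₀ (by positivity)] at hβgt
    linarith

/-- Follow-the-crowd response `q = min{β̂ψ, 1}`, endemic disease `ρ > 1`
with `μρ < β̂ < μ + 1`: the disease-free vaccinated point `(0, 1 − μ/β̂, η̂)` is a
Lyapunov-stable equilibrium of `g`. -/
theorem stmt_6 (lam r b ν d δ βh ρ μ θh ψh ηh : ℝ)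
    (hlam : 0 < lam) (hr : 0 < r) (hb : 0 < b) (hν : 0 < ν)
    (hd : 0 ≤ d) (hbd : d < b) (hδ : 0 < δ) (hβ : 0 < βh)
    (hρdef : ρ = lam / (r + b)) (hμdef : μ = b / ν)
    (hρ : 1 < ρ) (hβgt : μ * ρ < βh) (hβlt : βh < μ + 1)
    (hθ : θh = 0) (hψ : ψh = 1 - μ / βh)
    (hηdef : ηh = (b - d) / varrho lam r b ν d θh ψh) (hη : δ < ηh) :
    IsLyapunovStableEquilibrium
      (epiVF lam r b ν d (fun _ ψ => min (βh * ψ) 1)) (domD δ) (θh, ψh, ηh) :=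
  stmt_6_general lam r b ν d δ βh ρ μ θh ψh ηh hlam hr hb hν hd hδ hβ hρdef hμdef hρ hβgt hβlt hθ hψ
    hηdef hη
end

section
/- Fix reals λ, r, b, ν > 0, d ≥ 0 with b > d, δ > 0, and let q ≡ 1 (everyone vaccinates at each decision epoch). Set ρ := λ/(r+b) and μ := b/ν, and assume ρ > 1 and μρ > μ + 1. Let θ_E := 1 − 1/ρ − 1/(μρ), ψ_E := 1/(μρ), and η̂ := (b−d)/ϱ(θ_E,ψ_E). If η̂ > δ, then the point P := (θ_E, ψ_E, η̂) is a Lyapunov-stable equilibrium of g. -/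
/-! With `q ≡ 1` the equilibrium relations `λ φ_E = r + b` and `ν φ_E = b ψ_E` put `g` into
deviation coordinates `u = θ - θ_E`, `v = ψ - ψ_E`, `s = u + v`, `w = ϱ η - (b - d)`:
`η ϱ g^θ = -λ θ s`, `η ϱ g^ψ = -(ν s + b v)` and `ϱ g^η = -w`. For
`V = a u² / 2 + v² / 2 + ε w² / 2`, with `a λ θ_E = ν` chosen to cancel the `u v` terms, one gets
`η ϱ ⟨∇V, g⟩ = -ν s² - b v² - a λ u² s - ε η w A - ε η ϱ w²`, where `A` is bounded on `D` by a
multiple of `|s| + |v|`. Near the equilibrium the cubic term is dominated by the definite quadratic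
part `-ν s² - b v²`, and for small `ε` AM-GM absorbs the cross term into half of `-ε η ϱ w²`. -/

theorem pos_of_weighted_sq_add {α β γ x y z : ℝ} (hα : 0 < α) (hβ : 0 < β) (hγ : 0 < γ)
    (h : x ≠ 0 ∨ y ≠ 0 ∨ z ≠ 0) : 0 < α * x ^ 2 + β * y ^ 2 + γ * z ^ 2 := by
  have hx := mul_nonneg hα.le (sq_nonneg x)
  have hy := mul_nonneg hβ.le (sq_nonneg y)
  have hz := mul_nonneg hγ.le (sq_nonneg z)
  rcases h with h | h | h
  · linarith [mul_pos hα (pow_two_pos_of_ne_zero h)]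
  · linarith [mul_pos hβ (pow_two_pos_of_ne_zero h)]
  · linarith [mul_pos hγ (pow_two_pos_of_ne_zero h)]

theorem lie_numerator_le {ν b K ε η ϱ u v w A M R : ℝ} (hb : 0 < b) (hK : 0 ≤ K)
    (hε : 0 ≤ ε) (hη : 0 ≤ η) (hϱ : b ≤ ϱ) (hu : |u| < R) (hv : |v| < R)
    (hKR : 16 * K * R ≤ min ν b) (hA : η * A ^ 2 ≤ M * ((u + v) ^ 2 + v ^ 2))
    (hεM : 2 * ε * M ≤ min ν b * b) :
    -(ν * (u + v) ^ 2) - b * v ^ 2 - K * u ^ 2 * (u + v) - ε * η * w * A - ε * η * ϱ * w ^ 2 ≤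
      -(min ν b / 2 * ((u + v) ^ 2 + v ^ 2)) - ε * η * ϱ * w ^ 2 / 2 := by
  set m := min ν b
  set S := (u + v) ^ 2 + v ^ 2
  have hS : 0 ≤ S := by positivity
  have hmν : m ≤ ν := min_le_left ν b
  have hmb : m ≤ b := min_le_right ν b
  have hcubic : -(K * u ^ 2 * (u + v)) ≤ m / 4 * S := by
    have hR : 0 ≤ R := (abs_nonneg u).trans hu.le
    have hsum : -(u + v) ≤ 2 * R := by linarith [neg_abs_le u, neg_abs_le v]
    have hu2 : u ^ 2 ≤ 2 * S := by nlinarith [sq_nonneg (u + 2 * v)]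
    calc -(K * u ^ 2 * (u + v)) = K * u ^ 2 * -(u + v) := by ring
      _ ≤ K * u ^ 2 * (2 * R) := mul_le_mul_of_nonneg_left hsum (by positivity)
      _ ≤ K * (2 * S) * (2 * R) := by gcongr
      _ = 16 * K * R * S / 4 := by ring
      _ ≤ m / 4 * S := by linarith [mul_le_mul_of_nonneg_right hKR hS]
  -- AM-GM: `-2 b w A ≤ b² w² + A²`
  have hcross : -(ε * η * w * A) ≤ ε * η * ϱ * w ^ 2 / 2 + m / 4 * S := by
    have hamgm : 0 ≤ ε * η * (b * w + A) ^ 2 := by positivity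
    have hbϱ : ε * η * b * w ^ 2 ≤ ε * η * ϱ * w ^ 2 := by
      have : 0 ≤ ε * η * w ^ 2 := by positivity
      nlinarith
    have hεA : ε * (η * A ^ 2) ≤ ε * (M * S) := mul_le_mul_of_nonneg_left hA hε
    have hmS : ε * M * S ≤ m * b / 2 * S := by nlinarith
    nlinarith
  nlinarith [mul_le_mul_of_nonneg_right hmν (sq_nonneg (u + v)),
    mul_le_mul_of_nonneg_right hmb (sq_nonneg v)]

theorem lie_numerator_neg {ν b K ε η ϱ u v w A M R : ℝ} (hν : 0 < ν) (hb : 0 < b) (hK : 0 ≤ K)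
    (hε : 0 < ε) (hη : 0 < η) (hϱ : b ≤ ϱ) (hu : |u| < R) (hv : |v| < R)
    (hKR : 16 * K * R ≤ min ν b) (hA : η * A ^ 2 ≤ M * ((u + v) ^ 2 + v ^ 2))
    (hεM : 2 * ε * M ≤ min ν b * b) (huvw : u ≠ 0 ∨ v ≠ 0 ∨ w ≠ 0) :
    -(ν * (u + v) ^ 2) - b * v ^ 2 - K * u ^ 2 * (u + v) - ε * η * w * A
      - ε * η * ϱ * w ^ 2 < 0 := by
  have hsvw : u + v ≠ 0 ∨ v ≠ 0 ∨ w ≠ 0 := by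
    rcases huvw with h | h | h
    · by_cases hv : v = 0
      · exact Or.inl (by rwa [hv, add_zero])
      · exact Or.inr (Or.inl hv)
    · exact Or.inr (Or.inl h)
    · exact Or.inr (Or.inr h)
  have hm : 0 < min ν b / 2 := half_pos (lt_min hν hb)
  have hpos := pos_of_weighted_sq_add hm hm
    (half_pos (mul_pos (mul_pos hε hη) (hb.trans_le hϱ))) hsvw
  linarith [lie_numerator_le (w := w) hb hK hε.le hη.le hϱ hu hv hKR hA hεM]

section

variable {lam r b ν d θE ψE : ℝ}

theorem add_le_varrho {θ ψ : ℝ} (hlam : 0 ≤ lam) (hr : 0 ≤ r) (hν : 0 ≤ ν) (hθ : 0 ≤ θ)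
    (hφ : 0 ≤ 1 - θ - ψ) : b + d ≤ varrho lam r b ν d θ ψ := by
  unfold varrho
  have := mul_nonneg (mul_nonneg hlam hθ) hφ
  have := mul_nonneg hν hφ
  have := mul_nonneg hr hθ
  linarith

theorem sq_cross_term_le {θ ψ : ℝ} (hlam : 0 ≤ lam) (hr : 0 ≤ r) (hν : 0 ≤ ν) (hb : 0 ≤ b)
    (hθ : 0 ≤ θ) (hψ : 0 ≤ ψ) (hθψ : θ + ψ ≤ 1) (s v : ℝ) :
    (lam * θ * (lam * (1 - θ - ψ) - lam * θ - ν + r) * s - (lam * θ + ν) * (ν * s + b * v)) ^ 2 ≤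
      2 * (lam * (lam + ν + r) + (lam + ν) * (ν + b)) ^ 2 * (s ^ 2 + v ^ 2) := by
  set C := lam * (lam + ν + r) + (lam + ν) * (ν + b) with hC
  have hlamθ : |lam * θ| ≤ lam := by
    rw [abs_of_nonneg (by positivity)]
    nlinarith
  have hDθ : |lam * (1 - θ - ψ) - lam * θ - ν + r| ≤ lam + ν + r := by
    rw [abs_le]
    constructor <;> nlinarith
  have hDψ : |lam * θ + ν| ≤ lam + ν := by
    rw [abs_of_nonneg (by positivity)]
    nlinarith
  have hA : |lam * θ * (lam * (1 - θ - ψ) - lam * θ - ν + r) * s - (lam * θ + ν) * (ν * s + b * v)|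
      ≤ C * (|s| + |v|) := calc
    _ ≤ |lam * θ| * |lam * (1 - θ - ψ) - lam * θ - ν + r| * |s| +
          |lam * θ + ν| * (ν * |s| + b * |v|) := by
        refine (abs_sub _ _).trans (add_le_add (by rw [abs_mul, abs_mul]) ?_)
        rw [abs_mul]
        gcongr
        refine (abs_add_le _ _).trans ?_
        rw [abs_mul, abs_mul, abs_of_nonneg hν, abs_of_nonneg hb]
    _ ≤ lam * (lam + ν + r) * |s| + (lam + ν) * (ν * |s| + b * |v|) := by gcongr
    _ ≤ C * (|s| + |v|) := by
        have hs := abs_nonneg s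
        have hv := abs_nonneg v
        have h₁ : 0 ≤ lam * (lam + ν + r) := by positivity
        have h₂ : 0 ≤ lam + ν := by positivity
        rw [hC]
        nlinarith [mul_nonneg h₁ hv, mul_nonneg (mul_nonneg h₂ hb) hs,
          mul_nonneg (mul_nonneg h₂ hν) hv]
  calc _ = |lam * θ * (lam * (1 - θ - ψ) - lam * θ - ν + r) * s
              - (lam * θ + ν) * (ν * s + b * v)| ^ 2 := (sq_abs _).symm
    _ ≤ (C * (|s| + |v|)) ^ 2 := by gcongr
    _ ≤ 2 * C ^ 2 * (s ^ 2 + v ^ 2) := by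
        nlinarith [sq_nonneg (|s| - |v|), sq_abs s, sq_abs v, sq_nonneg C]

theorem epiVF_fst_mul (q : ℝ → ℝ → ℝ) (hE : lam * (1 - θE - ψE) = r + b) (x : ℝ × ℝ × ℝ)
    (hx : x.2.2 * varrho lam r b ν d x.1 x.2.1 ≠ 0) :
    (epiVF lam r b ν d q x).1 * (x.2.2 * varrho lam r b ν d x.1 x.2.1) =
      -(lam * x.1 * (x.1 - θE + (x.2.1 - ψE))) := by
  obtain ⟨hη, hϱ⟩ := mul_ne_zero_iff.1 hx
  simp only [epiVF]
  field_simp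
  linear_combination x.1 * hE

theorem epiVF_one_snd_mul (hE : ν * (1 - θE - ψE) = b * ψE) (x : ℝ × ℝ × ℝ)
    (hx : x.2.2 * varrho lam r b ν d x.1 x.2.1 ≠ 0) :
    (epiVF lam r b ν d (fun _ _ => 1) x).2.1 * (x.2.2 * varrho lam r b ν d x.1 x.2.1) =
      -(ν * (x.1 - θE + (x.2.1 - ψE)) + b * (x.2.1 - ψE)) := by
  obtain ⟨hη, hϱ⟩ := mul_ne_zero_iff.1 hx
  simp only [epiVF]
  field_simp
  linear_combination hE

theorem epiVF_thd_mul (q : ℝ → ℝ → ℝ) (x : ℝ × ℝ × ℝ) (hx : varrho lam r b ν d x.1 x.2.1 ≠ 0) :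
    (epiVF lam r b ν d q x).2.2 * varrho lam r b ν d x.1 x.2.1 =
      -(varrho lam r b ν d x.1 x.2.1 * x.2.2 - (b - d)) := by
  simp only [epiVF]
  field_simp
  ring

theorem epiVF_one_eq_zero (hE₁ : lam * (1 - θE - ψE) = r + b) (hE₂ : ν * (1 - θE - ψE) = b * ψE) :
    epiVF lam r b ν d (fun _ _ => 1) (θE, ψE, (b - d) / varrho lam r b ν d θE ψE) = 0 := by
  have h₁ : (1 - θE - ψE) * lam - r - b = 0 := by linear_combination hE₁
  have h₂ : 1 * (1 - θE - ψE) * ν - b * ψE = 0 := by linear_combination hE₂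
  simp only [epiVF, h₁, h₂, mul_zero, sub_self, Prod.mk_eq_zero]
  trivial

theorem sub_ne_zero_or_of_ne {θ ψ η : ℝ} (hϱE : varrho lam r b ν d θE ψE ≠ 0)
    (hne : (θ, ψ, η) ≠ (θE, ψE, (b - d) / varrho lam r b ν d θE ψE)) :
    θ - θE ≠ 0 ∨ ψ - ψE ≠ 0 ∨ varrho lam r b ν d θ ψ * η - (b - d) ≠ 0 := by
  by_contra h
  simp only [not_or, not_not] at h
  obtain ⟨hθ, hψ, hη⟩ := h
  rw [sub_eq_zero] at hθ hψ hη
  subst hθ hψ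
  exact hne (by rw [← hη, mul_div_cancel_left₀ η hϱE])

end

section

variable (lam r b ν d θE ψE a ε : ℝ)

noncomputable def lyapunovFn (x : ℝ × ℝ × ℝ) : ℝ :=
  a / 2 * (x.1 - θE) ^ 2 + 1 / 2 * (x.2.1 - ψE) ^ 2 +
    ε / 2 * (varrho lam r b ν d x.1 x.2.1 * x.2.2 - (b - d)) ^ 2

theorem contDiff_lyapunovFn : ContDiff ℝ 1 (lyapunovFn lam r b ν d θE ψE a ε) := by
  unfold lyapunovFn varrho
  fun_prop

theorem fderiv_lyapunovFn_apply (x y : ℝ × ℝ × ℝ) :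
    fderiv ℝ (lyapunovFn lam r b ν d θE ψE a ε) x y =
      a * (x.1 - θE) * y.1 + (x.2.1 - ψE) * y.2.1 +
        ε * (varrho lam r b ν d x.1 x.2.1 * x.2.2 - (b - d)) *
          (((lam * (1 - x.1 - x.2.1) - lam * x.1 - ν + r) * y.1 - (lam * x.1 + ν) * y.2.1) * x.2.2 +
            varrho lam r b ν d x.1 x.2.1 * y.2.2) := by
  have hθ : HasFDerivAt (fun p : ℝ × ℝ × ℝ => p.1) (ContinuousLinearMap.fst ℝ ℝ (ℝ × ℝ)) x :=
    hasFDerivAt_fst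
  have hψ : HasFDerivAt (fun p : ℝ × ℝ × ℝ => p.2.1)
      ((ContinuousLinearMap.fst ℝ ℝ ℝ).comp (ContinuousLinearMap.snd ℝ ℝ (ℝ × ℝ))) x :=
    hasFDerivAt_fst.comp x hasFDerivAt_snd
  have hη : HasFDerivAt (fun p : ℝ × ℝ × ℝ => p.2.2)
      ((ContinuousLinearMap.snd ℝ ℝ ℝ).comp (ContinuousLinearMap.snd ℝ ℝ (ℝ × ℝ))) x :=
    hasFDerivAt_snd.comp x hasFDerivAt_snd
  have hφ := ((hasFDerivAt_const (1 : ℝ) x).sub hθ).sub hψ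
  have hϱ := (((hasFDerivAt_const (b + d) x).add ((hθ.const_mul lam).mul hφ)).add
    (hφ.const_mul ν)).add (hθ.const_mul r)
  have hw := (hϱ.mul hη).sub_const (b - d)
  have hV := ((((hθ.sub_const θE).pow 2).const_mul (a / 2)).add
    (((hψ.sub_const ψE).pow 2).const_mul (1 / 2))).add ((hw.pow 2).const_mul (ε / 2))
  rw [(hV.congr_of_eventuallyEq (f₁ := lyapunovFn lam r b ν d θE ψE a ε)
    (Filter.Eventually.of_forall fun p => rfl)).fderiv]
  simp only [Nat.add_one_sub_one, pow_one, nsmul_eq_mul, Nat.cast_ofNat, Pi.sub_apply,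
    Pi.mul_apply, Pi.add_apply, zero_sub, zero_add, add_apply,
    smul_apply, ContinuousLinearMap.coe_fst', smul_eq_mul,
    ContinuousLinearMap.comp_apply, ContinuousLinearMap.coe_snd', sub_apply,
    neg_apply, varrho]
  ring

end

section

variable {lam r b ν d θE ψE : ℝ}

theorem fderiv_lyapunovFn_epiVF_one_mul {a ε θ ψ η : ℝ} (hE₁ : lam * (1 - θE - ψE) = r + b)
    (hE₂ : ν * (1 - θE - ψE) = b * ψE) (ha : a * lam * θE = ν) (hη : η ≠ 0)
    (hϱ : varrho lam r b ν d θ ψ ≠ 0) :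
    fderiv ℝ (lyapunovFn lam r b ν d θE ψE a ε) (θ, ψ, η)
        (epiVF lam r b ν d (fun _ _ => 1) (θ, ψ, η)) * (η * varrho lam r b ν d θ ψ) =
      -(ν * (θ - θE + (ψ - ψE)) ^ 2) - b * (ψ - ψE) ^ 2
        - a * lam * (θ - θE) ^ 2 * (θ - θE + (ψ - ψE))
        - ε * η * (varrho lam r b ν d θ ψ * η - (b - d)) *
            (lam * θ * (lam * (1 - θ - ψ) - lam * θ - ν + r) * (θ - θE + (ψ - ψE))
              - (lam * θ + ν) * (ν * (θ - θE + (ψ - ψE)) + b * (ψ - ψE)))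
        - ε * η * varrho lam r b ν d θ ψ * (varrho lam r b ν d θ ψ * η - (b - d)) ^ 2 := by
  have hx : η * varrho lam r b ν d θ ψ ≠ 0 := mul_ne_zero hη hϱ
  have h₁ := epiVF_fst_mul (fun _ _ => 1) hE₁ (θ, ψ, η) hx
  have h₂ := epiVF_one_snd_mul hE₂ (θ, ψ, η) hx
  have h₃ := epiVF_thd_mul (fun _ _ => 1) (θ, ψ, η) hϱ
  rw [fderiv_lyapunovFn_apply]
  set ϱ := varrho lam r b ν d θ ψ
  set w := ϱ * η - (b - d)
  linear_combination (a * (θ - θE) + ε * w * (lam * (1 - θ - ψ) - lam * θ - ν + r) * η) * h₁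
    + ((ψ - ψE) - ε * w * (lam * θ + ν) * η) * h₂ + ε * w * η * ϱ * h₃
    - (θ - θE) * (θ - θE + (ψ - ψE)) * ha

theorem lyapunovFn_pos {a ε : ℝ} (ha : 0 < a) (hε : 0 < ε) {x : ℝ × ℝ × ℝ}
    (hx : x.1 - θE ≠ 0 ∨ x.2.1 - ψE ≠ 0 ∨ varrho lam r b ν d x.1 x.2.1 * x.2.2 - (b - d) ≠ 0) :
    0 < lyapunovFn lam r b ν d θE ψE a ε x :=
  pos_of_weighted_sq_add (half_pos ha) one_half_pos (half_pos hε) hx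

theorem lyapunovFn_eq_zero {a ε η : ℝ} (hη : varrho lam r b ν d θE ψE * η = b - d) :
    lyapunovFn lam r b ν d θE ψE a ε (θE, ψE, η) = 0 := by
  simp [lyapunovFn, hη]

theorem fderiv_lyapunovFn_epiVF_one_neg {a ε R H θ ψ η : ℝ} (hlam : 0 < lam) (hr : 0 ≤ r)
    (hb : 0 < b) (hν : 0 < ν) (hd : 0 ≤ d) (hE₁ : lam * (1 - θE - ψE) = r + b)
    (hE₂ : ν * (1 - θE - ψE) = b * ψE) (ha₀ : 0 < a) (ha : a * lam * θE = ν) (hε : 0 < ε)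
    (hθ : 0 ≤ θ) (hψ : 0 ≤ ψ) (hθψ : θ + ψ ≤ 1) (hη : 0 < η) (hηH : η ≤ H)
    (hu : |θ - θE| < R) (hv : |ψ - ψE| < R) (hR : 16 * (a * lam) * R ≤ min ν b)
    (hεH : 4 * H * (lam * (lam + ν + r) + (lam + ν) * (ν + b)) ^ 2 * ε ≤ min ν b * b)
    (hne : θ - θE ≠ 0 ∨ ψ - ψE ≠ 0 ∨ varrho lam r b ν d θ ψ * η - (b - d) ≠ 0) :
    fderiv ℝ (lyapunovFn lam r b ν d θE ψE a ε) (θ, ψ, η)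
      (epiVF lam r b ν d (fun _ _ => 1) (θ, ψ, η)) < 0 := by
  set ϱ := varrho lam r b ν d θ ψ
  set C := lam * (lam + ν + r) + (lam + ν) * (ν + b)
  have hϱ : b ≤ ϱ := by
    linarith [add_le_varrho (b := b) (d := d) (ψ := ψ) hlam.le hr hν.le hθ (by linarith)]
  have hϱ₀ : 0 < ϱ := hb.trans_le hϱ
  set A := lam * θ * (lam * (1 - θ - ψ) - lam * θ - ν + r) * (θ - θE + (ψ - ψE))
    - (lam * θ + ν) * (ν * (θ - θE + (ψ - ψE)) + b * (ψ - ψE))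
  have hA : A ^ 2 ≤ _ :=
    sq_cross_term_le hlam.le hr hν.le hb.le hθ hψ hθψ (θ - θE + (ψ - ψE)) (ψ - ψE)
  have hηA : η * A ^ 2 ≤ (2 * H * C ^ 2) * ((θ - θE + (ψ - ψE)) ^ 2 + (ψ - ψE) ^ 2) := by
    calc _ ≤ H * _ := mul_le_mul_of_nonneg_right hηH (sq_nonneg _)
      _ ≤ H * (2 * C ^ 2 * ((θ - θE + (ψ - ψE)) ^ 2 + (ψ - ψE) ^ 2)) :=
          mul_le_mul_of_nonneg_left hA (hη.le.trans hηH)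
      _ = _ := by ring
  have hQ := lie_numerator_neg hν hb (mul_pos ha₀ hlam).le hε hη hϱ hu hv hR hηA (by linarith) hne
  rw [← fderiv_lyapunovFn_epiVF_one_mul hE₁ hE₂ ha hη.ne' hϱ₀.ne'] at hQ
  exact (neg_iff_pos_of_mul_neg hQ).mpr (mul_pos hη hϱ₀)

theorem isLyapunovStableEquilibrium_epiVF_one {δ : ℝ} (hlam : 0 < lam) (hr : 0 ≤ r) (hb : 0 < b)
    (hν : 0 < ν) (hd : 0 ≤ d) (hδ : 0 < δ) (hθE : 0 < θE) (hE₁ : lam * (1 - θE - ψE) = r + b)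
    (hE₂ : ν * (1 - θE - ψE) = b * ψE) (hη : δ < (b - d) / varrho lam r b ν d θE ψE) :
    IsLyapunovStableEquilibrium (epiVF lam r b ν d (fun _ _ => 1)) (domD δ)
      (θE, ψE, (b - d) / varrho lam r b ν d θE ψE) := by
  have hφE : 0 < 1 - θE - ψE := pos_of_mul_pos_right (hE₁ ▸ by linarith) hlam.le
  have hψE : 0 < ψE := pos_of_mul_pos_right (hE₂ ▸ mul_pos hν hφE) hb.le
  have hϱE : 0 < varrho lam r b ν d θE ψE := by
    linarith [add_le_varrho (b := b) (d := d) hlam.le hr hν.le hθE.le hφE.le]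
  have hm : 0 < min ν b := lt_min hν hb
  set ηh := (b - d) / varrho lam r b ν d θE ψE
  set C := lam * (lam + ν + r) + (lam + ν) * (ν + b)
  set a := ν / (lam * θE) with ha_def
  have ha₀ : 0 < a := by positivity
  have ha : a * lam * θE = ν := by rw [ha_def]; field_simp
  obtain ⟨R, hR₀, hR⟩ := exists_pos_mul_lt hm (16 * (a * lam))
  obtain ⟨ε, hε₀, hε⟩ := exists_pos_mul_lt (mul_pos hm hb) (4 * (ηh + 1) * C ^ 2)
  refine ⟨⟨hθE.le, hψE.le, by linarith, hη⟩, epiVF_one_eq_zero hE₁ hE₂, min 1 R, lt_min one_pos hR₀,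
    lyapunovFn lam r b ν d θE ψE a ε, contDiff_lyapunovFn .., lyapunovFn_eq_zero
      (mul_div_cancel₀ _ hϱE.ne'), ?_⟩
  rintro ⟨θ, ψ, η⟩ ⟨⟨hθ, hψ, hθψ, hδη⟩, hball⟩ hne
  simp only [Metric.mem_ball, Prod.dist_eq, Real.dist_eq, max_lt_iff, lt_min_iff] at hball
  obtain ⟨⟨-, -, hw⟩, hu, hv, -⟩ := hball
  have hne' := sub_ne_zero_or_of_ne hϱE.ne' hne
  exact ⟨lyapunovFn_pos ha₀ hε₀ hne',
    fderiv_lyapunovFn_epiVF_one_neg hlam hr hb hν hd hE₁ hE₂ ha₀ ha hε₀ hθ hψ hθψ (hδ.trans hδη)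
      (by linarith [le_abs_self (η - ηh)]) hu hv hR.le hε.le hne'⟩

end

theorem stmt_13_general (lam r b ν d δ ρ μ θE ψE ηh : ℝ)
    (hlam : 0 < lam) (hr : 0 < r) (hb : 0 < b) (hν : 0 < ν)
    (hd : 0 ≤ d) (hδ : 0 < δ)
    (hρdef : ρ = lam / (r + b)) (hμdef : μ = b / ν)
    (hμρ : μ + 1 < μ * ρ)
    (hθ : θE = 1 - 1 / ρ - 1 / (μ * ρ)) (hψ : ψE = 1 / (μ * ρ))
    (hηdef : ηh = (b - d) / varrho lam r b ν d θE ψE) (hη : δ < ηh) :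
    IsLyapunovStableEquilibrium
      (epiVF lam r b ν d (fun _ _ => 1)) (domD δ) (θE, ψE, ηh) := by
  have hρ₀ : 0 < ρ := hρdef ▸ by positivity
  have hμ₀ : 0 < μ := hμdef ▸ by positivity
  have hφE : 1 - θE - ψE = 1 / ρ := by rw [hθ, hψ]; ring
  have hθE : 0 < θE := by
    have h : 1 - 1 / ρ - 1 / (μ * ρ) = (μ * ρ - (μ + 1)) / (μ * ρ) := by field_simp; ring
    rw [hθ, h]
    exact div_pos (by linarith) (by positivity)
  have hE₁ : lam * (1 - θE - ψE) = r + b := by rw [hφE, hρdef]; field_simp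
  have hE₂ : ν * (1 - θE - ψE) = b * ψE := by rw [hφE, hψ, hμdef]; field_simp
  subst hηdef
  exact isLyapunovStableEquilibrium_epiVF_one hlam hr.le hb hν hd hδ hθE hE₁ hE₂ hη

/-- Response `q ≡ 1` (everyone vaccinates at each decision epoch),
endemic disease `ρ > 1` with `μρ > μ + 1`: the interior point
`(θ_E, ψ_E, η̂) = (1 − 1/ρ − 1/(μρ), 1/(μρ), η̂)` is a Lyapunov-stable equilibrium of `g`. -/
theorem stmt_13 (lam r b ν d δ ρ μ θE ψE ηh : ℝ)
    (hlam : 0 < lam) (hr : 0 < r) (hb : 0 < b) (hν : 0 < ν)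
    (hd : 0 ≤ d) (hbd : d < b) (hδ : 0 < δ)
    (hρdef : ρ = lam / (r + b)) (hμdef : μ = b / ν)
    (hρ : 1 < ρ) (hμρ : μ + 1 < μ * ρ)
    (hθ : θE = 1 - 1 / ρ - 1 / (μ * ρ)) (hψ : ψE = 1 / (μ * ρ))
    (hηdef : ηh = (b - d) / varrho lam r b ν d θE ψE) (hη : δ < ηh) :
    IsLyapunovStableEquilibrium
      (epiVF lam r b ν d (fun _ _ => 1)) (domD δ) (θE, ψE, ηh) :=
  stmt_13_general lam r b ν d δ ρ μ θE ψE ηh hlam hr hb hν hd hδ hρdef hμdef hμρ hθ hψ hηdef hη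
end
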